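/- Let f be a degree-d covering of the open annulus A (|d|>1) semiconjugate to m_d via h, and let p, q be fixed points of f. The following are equivalent: (1) there is an arc γ from p to q such that for every n > 0 the lift γₙ of γ by fⁿ starting at p ends at q; (2) there is an arc γ from p to q with f(γ) homotopic to γ relative to endpoints; (3) h(p) = h(q). -/

import Mathlib

/-!
Lift everything to the universal cover `AnnCov = (0,1) × ℝ`: `f` and `h` become `F` and `H` with
`H ∘ F = d • H + c`. For a path `γ` in the annulus let `displacement H γ` be the change of `H`
along a lift of `γ`. It lifts the increment of `h` along `γ`, it is a homotopy invariant, it is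
multiplied by `d` under `f`, and, as `AnnCov` is simply connected and `H` separates the points of
a fibre, it classifies the paths between two given points up to homotopy.

If `f(γ) ≃ γ` then `displacement γ = d • displacement γ`, so it vanishes. If every `fⁿ`-lift `γₙ`
ends at `q`, then `displacement γ = dⁿ • displacement γₙ` with both congruent mod `ℤ`, for every
`n`, which again forces `displacement γ = 0`; either way `h p = h q`. Conversely, if
`h p = h q` there is a path `γ` with displacement zero; `f(γ)` also has displacement zero, hence
is homotopic to `γ`, and an `fⁿ`-lift of `γ` from `p` has displacement zero, so `Fⁿ` sends the
endpoint of its lift and the endpoint of the lift of `γ` to the same point; since `f` is a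
covering, `F` is injective and the `fⁿ`-lift ends at `q`.
-/

noncomputable section

abbrev S1 := AddCircle (1 : ℝ)

def proj : ℝ → S1 := fun x => (x : S1)

def md (d : ℤ) : S1 → S1 := fun z => d • z

abbrev Ann := Set.Ioo (0 : ℝ) 1 × S1

abbrev AnnCov := Set.Ioo (0 : ℝ) 1 × ℝ

def aproj : AnnCov → Ann := fun p => (p.1, proj p.2)

/-- A connector: a closed connected subset of the annulus accumulating on both
boundary components. -/
def IsConnector (C : Set Ann) : Prop :=
  IsClosed C ∧ IsConnected C ∧
    ∀ r : ℝ, 0 < r → (∃ p ∈ C, (p.1 : ℝ) < r) ∧ (∃ p ∈ C, (1 - r : ℝ) < p.1)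

/-- A trivial (non-essential) connector: a connector disjoint from some other
connector. -/
def IsTrivialConnector (C : Set Ann) : Prop :=
  IsConnector C ∧ ∃ C', IsConnector C' ∧ Disjoint C C'

/-- `f` is a (covering) map of the annulus of degree `d`, witnessed by a lift. -/
def HasDegree (f : Ann → Ann) (d : ℤ) : Prop :=
  ∃ F : AnnCov → AnnCov, Continuous F ∧ (∀ p, aproj (F p) = f (aproj p)) ∧
    ∀ (x : Set.Ioo (0:ℝ) 1) (y : ℝ),
      (F (x, y + 1)).1 = (F (x, y)).1 ∧ (F (x, y + 1)).2 = (F (x, y)).2 + d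

/-- `f` is semiconjugate to `m_d` on the circle: there is a continuous
`h : A → S¹` with `h∘f = m_d∘h` inducing an isomorphism on `π₁` (it lifts to
`H` with `H(x,y+1) = H(x,y) ± 1`). -/
def SemiconjToMd (f : Ann → Ann) (d : ℤ) : Prop :=
  ∃ h : Ann → S1, Continuous h ∧ (∀ a, h (f a) = md d (h a)) ∧
    ∃ e : ℤ, (e = 1 ∨ e = -1) ∧ ∃ H : AnnCov → ℝ, Continuous H ∧
      (∀ p, proj (H p) = h (aproj p)) ∧
      ∀ (x : Set.Ioo (0:ℝ) 1) (y : ℝ), H (x, y + 1) = H (x, y) + e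

open Set Function unitInterval

section Covering

variable {E X E' X' : Type*} [TopologicalSpace E] [TopologicalSpace X] [TopologicalSpace E']
  [TopologicalSpace X']

theorem IsEvenlyCovered.prodMap {ι κ : Type*} [TopologicalSpace ι] [TopologicalSpace κ]
    {f : E → X} {g : E' → X'} {x : X} {x' : X'}
    (hf : IsEvenlyCovered f x ι) (hg : IsEvenlyCovered g x' κ) :
    IsEvenlyCovered (Prod.map f g) (x, x') (ι × κ) := by
  obtain ⟨hI, U, hxU, hU, hfU, Hf, hHf⟩ := hf
  obtain ⟨hJ, V, hxV, hV, hgV, Hg, hHg⟩ := hg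
  refine ⟨inferInstance, U ×ˢ V, ⟨hxU, hxV⟩, hU.prod hV,
    preimage_prod_map_prod f g U V ▸ hfU.prod hgV,
    ((Homeomorph.setCongr (preimage_prod_map_prod f g U V)).trans (Homeomorph.Set.prod _ _)).trans
      ((Hf.prodCongr Hg).trans ((Homeomorph.prodProdProdComm _ _ _ _).trans
        ((Homeomorph.Set.prod U V).symm.prodCongr (Homeomorph.refl _)))),
    fun e ↦ Prod.ext (hHf ⟨e.1.1, e.2.1⟩) (hHg ⟨e.1.2, e.2.2⟩)⟩

theorem isCoveringMap_id : IsCoveringMap (id : X → X) := fun x ↦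
  (show IsEvenlyCovered id x Unit from ⟨inferInstance, univ, trivial, isOpen_univ, isOpen_univ,
      (Homeomorph.Set.univ X).trans ((Homeomorph.prodPUnit X).symm.trans
        ((Homeomorph.Set.univ X).symm.prodCongr (Homeomorph.refl _))),
      fun _ ↦ rfl⟩).to_isEvenlyCovered_preimage

theorem IsCoveringMap.prodMap {f : E → X} {g : E' → X'} (hf : IsCoveringMap f)
    (hg : IsCoveringMap g) : IsCoveringMap (Prod.map f g) :=
  fun x ↦ ((hf x.1).prodMap (hg x.2)).to_isEvenlyCovered_preimage

theorem IsCoveringMap.exists_path_lifts_iterate {f : X → X} (hf : IsCoveringMap f) (n : ℕ)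
    (γ : C(I, X)) (x : X) (hx : γ 0 = f^[n] x) : ∃ Γ : C(I, X), f^[n] ∘ Γ = γ ∧ Γ 0 = x := by
  induction n generalizing x with
  | zero => exact ⟨γ, rfl, hx⟩
  | succ n ih =>
    obtain ⟨Γ', hΓ', hΓ'0⟩ := ih (f x) (by rwa [← iterate_succ_apply])
    obtain ⟨Γ, hΓ, hΓ0⟩ := hf.exists_path_lifts Γ' x hΓ'0
    exact ⟨Γ, by rw [iterate_succ, comp_assoc, hΓ, hΓ'], hΓ0⟩

theorem IsCoveringMap.eq_of_lift_eq {f : X → X'} (hf : IsCoveringMap f) {π : E → X}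
    {π' : E' → X'} (hπ : Continuous π) (hπ' : Continuous π') [PathConnectedSpace E]
    [SimplyConnectedSpace E'] {φ : E → E'} (hφ : Continuous φ) (hφf : ∀ z, π' (φ z) = f (π z))
    {z w : E} (hzw : φ z = φ w) : π z = π w := by
  -- `f` maps `π ∘ ρ` to the null-homotopic loop `π' ∘ φ ∘ ρ`, so `π ∘ ρ` is a loop.
  let ρ := PathConnectedSpace.somePath z w
  obtain ⟨hloop⟩ := SimplyConnectedSpace.paths_homotopic ((ρ.map hφ).cast rfl hzw) (.refl _)
  have hnull : (ContinuousMap.comp ⟨f, hf.continuous⟩ (ρ.map hπ).toContinuousMap).HomotopicRel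
      (.const I (f (π z))) {0, 1} := by
    have h₀ : ContinuousMap.comp ⟨f, hf.continuous⟩ (ρ.map hπ).toContinuousMap =
        ContinuousMap.comp ⟨π', hπ'⟩ ((ρ.map hφ).cast rfl hzw).toContinuousMap := by
      ext t; exact (hφf (ρ t)).symm
    have h₁ : ContinuousMap.const I (f (π z)) =
        ContinuousMap.comp ⟨π', hπ'⟩ (Path.refl (φ z)).toContinuousMap := by
      ext t; exact (hφf z).symm
    rw [h₀, h₁]
    exact ⟨hloop.compContinuousMap _⟩
  have hρ := (hf.eq_liftPath_iff'
    (γ := ContinuousMap.comp ⟨f, hf.continuous⟩ (ρ.map hπ).toContinuousMap) (e := π z)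
    (by simp)).2 ⟨rfl, (ρ.map hπ).source⟩
  have hend := hf.liftPath_apply_one_eq_of_homotopicRel hnull (π z) (by simp) rfl
  rw [← hρ] at hend
  have hconst := congrArg (fun Γ : C(I, X) ↦ Γ 1) (hf.liftPath_const (e := π z) rfl)
  simpa using (hend.trans hconst).symm

end Covering

theorem proj_eq_proj_iff {x y : ℝ} : proj x = proj y ↔ ∃ k : ℤ, y = x + k := by
  simp only [proj, ← sub_eq_zero (a := (x : S1)), ← AddCircle.coe_sub, AddCircle.coe_eq_zero_iff,
    zsmul_one]
  constructor
  · rintro ⟨k, hk⟩; exact ⟨-k, by push_cast; linarith⟩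
  · rintro ⟨k, rfl⟩; exact ⟨-k, by push_cast; ring⟩

theorem proj_intCast_mul (d : ℤ) (x : ℝ) : proj (d * x) = md d (proj x) := by
  rw [md, proj, proj, ← zsmul_eq_mul, AddCircle.coe_zsmul]

theorem proj_sub (x y : ℝ) : proj (x - y) = proj x - proj y := AddCircle.coe_sub 1 x y

theorem continuous_proj : Continuous proj := (AddCircle.isCoveringMap_coe (1 : ℝ)).continuous

theorem sub_eq_sub_of_proj_eq {A : Type*} [TopologicalSpace A] [PreconnectedSpace A]
    {u v : A → ℝ} (hu : Continuous u) (hv : Continuous v) (huv : ∀ a, proj (u a) = proj (v a))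
    (a b : A) : u a - v a = u b - v b := by
  have hzero (a : A) : proj (u a - v a) = 0 := by
    rw [proj, AddCircle.coe_sub, sub_eq_zero]; exact huv a
  have hconst := (AddCircle.isCoveringMap_coe (1 : ℝ)).eq_of_comp_eq (hu.sub hv)
    (continuous_const (y := u b - v b)) (funext fun a ↦ (hzero a).trans (hzero b).symm) b rfl
  exact congrFun hconst a

instance : ContractibleSpace (Ioo (0 : ℝ) 1) :=
  (convex_Ioo 0 1).contractibleSpace (nonempty_Ioo.2 one_pos)

def deck (k : ℤ) (z : AnnCov) : AnnCov := (z.1, z.2 + k)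

theorem continuous_deck (k : ℤ) : Continuous (deck k) := by unfold deck; fun_prop

theorem continuous_aproj : Continuous aproj :=
  continuous_fst.prodMk (continuous_proj.comp continuous_snd)

theorem isCoveringMap_aproj : IsCoveringMap aproj :=
  isCoveringMap_id.prodMap (AddCircle.isCoveringMap_coe 1)

theorem aproj_eq_aproj_iff {z w : AnnCov} : aproj z = aproj w ↔ ∃ k : ℤ, w = deck k z := by
  simp only [aproj, deck, Prod.ext_iff, proj_eq_proj_iff]
  constructor
  · rintro ⟨h₁, k, hk⟩; exact ⟨k, h₁.symm, hk⟩
  · rintro ⟨k, h₁, hk⟩; exact ⟨h₁.symm, k, hk⟩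

theorem aproj_deck (k : ℤ) (z : AnnCov) : aproj (deck k z) = aproj z :=
  (aproj_eq_aproj_iff.2 ⟨k, rfl⟩).symm

def liftPoint (a : Ann) : AnnCov := (a.1, a.2.out)

theorem aproj_liftPoint (a : Ann) : aproj (liftPoint a) = a :=
  Prod.ext rfl (Quotient.out_eq a.2)

def IsDeckEquivariant (H : AnnCov → ℝ) (e : ℤ) : Prop :=
  ∀ (x : Ioo (0 : ℝ) 1) (y : ℝ), H (x, y + 1) = H (x, y) + e

section Displacement

variable {H : AnnCov → ℝ} {e : ℤ}

theorem IsDeckEquivariant.apply_deck (hH : IsDeckEquivariant H e) (k : ℤ) (z : AnnCov) :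
    H (deck k z) = H z + e * k := by
  have := AddConstMapClass.map_add_int'
    (⟨fun y ↦ H (z.1, y), hH z.1⟩ : AddConstMap ℝ ℝ 1 (e : ℝ)) z.2 k
  simpa [deck, mul_comm] using this

theorem eq_of_aproj_eq_of_apply_eq (hH : IsDeckEquivariant H e) (he : e ≠ 0) {z w : AnnCov}
    (hzw : aproj z = aproj w) (hH' : H z = H w) : z = w := by
  obtain ⟨k, rfl⟩ := aproj_eq_aproj_iff.1 hzw
  rw [hH.apply_deck, left_eq_add, mul_eq_zero] at hH'
  have hk : k = 0 := by exact_mod_cast hH'.resolve_left (by exact_mod_cast he)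
  simp [deck, hk]

variable (H) in
def displacement (γ : C(I, Ann)) : ℝ :=
  let Γ := isCoveringMap_aproj.liftPath γ (liftPoint (γ 0)) (aproj_liftPoint _).symm
  H (Γ 1) - H (Γ 0)

theorem displacement_eq (hH : IsDeckEquivariant H e) {γ : C(I, Ann)} (Γ : C(I, AnnCov))
    (hΓ : aproj ∘ Γ = γ) :
    displacement H γ = H (Γ 1) - H (Γ 0) := by
  have h₀ : γ 0 = aproj (liftPoint (γ 0)) := (aproj_liftPoint _).symm
  set L := isCoveringMap_aproj.liftPath γ (liftPoint (γ 0)) h₀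
  obtain ⟨k, hk⟩ := aproj_eq_aproj_iff.1
    ((congrFun hΓ 0).trans (congrFun (isCoveringMap_aproj.liftPath_lifts γ _ h₀) 0).symm)
  have hL : (⟨deck k, continuous_deck k⟩ : C(AnnCov, AnnCov)).comp Γ = L :=
    (isCoveringMap_aproj.eq_liftPath_iff' _).2
      ⟨funext fun t ↦ (aproj_deck k (Γ t)).trans (congrFun hΓ t),
        hk.symm.trans (isCoveringMap_aproj.liftPath_zero γ _ h₀)⟩
  change H (L 1) - H (L 0) = _
  simp only [← hL, ContinuousMap.comp_apply, ContinuousMap.coe_mk, hH.apply_deck]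
  ring

theorem proj_displacement (hH : IsDeckEquivariant H e) {h : Ann → S1}
    (hHh : ∀ z, proj (H z) = h (aproj z)) (γ : C(I, Ann)) :
    proj (displacement H γ) = h (γ 1) - h (γ 0) := by
  obtain ⟨Γ, hΓ, -⟩ :=
    isCoveringMap_aproj.exists_path_lifts γ (liftPoint (γ 0)) (aproj_liftPoint _).symm
  rw [displacement_eq hH Γ hΓ, proj_sub, hHh, hHh, ← congrFun hΓ 0, ← congrFun hΓ 1]
  rfl

theorem displacement_comp (hH : IsDeckEquivariant H e) {g : Ann → Ann} (hg : Continuous g)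
    {φ : AnnCov → AnnCov} (hφ : Continuous φ)
    (hφg : Semiconj aproj φ g) {D : ℝ} (hHφ : ∀ z w, H (φ z) - H (φ w) = D * (H z - H w))
    (γ : C(I, Ann)) :
    displacement H ((⟨g, hg⟩ : C(Ann, Ann)).comp γ) = D * displacement H γ := by
  obtain ⟨Γ, hΓ, -⟩ :=
    isCoveringMap_aproj.exists_path_lifts γ (liftPoint (γ 0)) (aproj_liftPoint _).symm
  have hφΓ : aproj ∘ ((⟨φ, hφ⟩ : C(AnnCov, AnnCov)).comp Γ) = (⟨g, hg⟩ : C(Ann, Ann)).comp γ :=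
    funext fun t ↦ (hφg (Γ t)).trans (congrArg g (congrFun hΓ t : aproj (Γ t) = γ t))
  rw [displacement_eq hH Γ hΓ, displacement_eq hH _ hφΓ]
  exact hHφ _ _

theorem displacement_eq_of_homotopic (hH : IsDeckEquivariant H e) {a b : Ann} {γ₀ γ₁ : Path a b}
    (h : γ₀.Homotopic γ₁) :
    displacement H γ₀.toContinuousMap = displacement H γ₁.toContinuousMap := by
  have ha : a = aproj (liftPoint a) := (aproj_liftPoint a).symm
  rw [displacement_eq hH _ (isCoveringMap_aproj.liftPath_lifts _ _ (γ₀.source.trans ha)),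
    displacement_eq hH _ (isCoveringMap_aproj.liftPath_lifts _ _ (γ₁.source.trans ha)),
    isCoveringMap_aproj.liftPath_apply_one_eq_of_homotopicRel h, isCoveringMap_aproj.liftPath_zero,
    isCoveringMap_aproj.liftPath_zero]

/-- Since `AnnCov` is simply connected, paths are classified by the endpoints of their lifts,
which `H` separates within a fiber. -/
theorem homotopic_of_displacement_eq (hH : IsDeckEquivariant H e) (he : e ≠ 0) {a b : Ann}
    {γ₀ γ₁ : Path a b}
    (h : displacement H γ₀.toContinuousMap = displacement H γ₁.toContinuousMap) :
    γ₀.Homotopic γ₁ := by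
  have ha : a = aproj (liftPoint a) := (aproj_liftPoint a).symm
  set L₀ := isCoveringMap_aproj.liftPath γ₀.toContinuousMap _ (γ₀.source.trans ha)
  set L₁ := isCoveringMap_aproj.liftPath γ₁.toContinuousMap _ (γ₁.source.trans ha)
  have hL₀ : aproj ∘ L₀ = γ₀ := isCoveringMap_aproj.liftPath_lifts ..
  have hL₁ : aproj ∘ L₁ = γ₁ := isCoveringMap_aproj.liftPath_lifts ..
  have hL₀0 : L₀ 0 = liftPoint a := isCoveringMap_aproj.liftPath_zero ..
  have hL₁0 : L₁ 0 = liftPoint a := isCoveringMap_aproj.liftPath_zero ..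
  have hend : L₀ 1 = L₁ 1 := by
    refine eq_of_aproj_eq_of_apply_eq hH he ?_ ?_
    · rw [← comp_apply (f := aproj), hL₀, ← comp_apply (f := aproj), hL₁]; simp
    · rw [displacement_eq hH L₀ hL₀, displacement_eq hH L₁ hL₁, hL₀0, hL₁0] at h
      linarith
  obtain ⟨F⟩ := SimplyConnectedSpace.paths_homotopic
    (⟨L₀, hL₀0, rfl⟩ : Path (liftPoint a) (L₀ 1)) ⟨L₁, hL₁0, hend.symm⟩
  have h₀ : (⟨aproj, continuous_aproj⟩ : C(AnnCov, Ann)).comp L₀ = γ₀.toContinuousMap :=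
    ContinuousMap.ext (congrFun hL₀)
  have h₁ : (⟨aproj, continuous_aproj⟩ : C(AnnCov, Ann)).comp L₁ = γ₁.toContinuousMap :=
    ContinuousMap.ext (congrFun hL₁)
  exact ⟨(F.compContinuousMap _).cast h₀ h₁⟩

theorem exists_path_displacement_eq_zero (hH : IsDeckEquivariant H e) (he : e = 1 ∨ e = -1)
    {h : Ann → S1} (hHh : ∀ z, proj (H z) = h (aproj z)) {a b : Ann} (hab : h a = h b) :
    ∃ γ : Path a b, displacement H γ.toContinuousMap = 0 := by
  obtain ⟨k, hk⟩ := proj_eq_proj_iff.1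
    (show proj (H (liftPoint b)) = proj (H (liftPoint a)) by
      rw [hHh, hHh, aproj_liftPoint, aproj_liftPoint, hab])
  have hw : aproj (deck (e * k) (liftPoint b)) = b := by rw [aproj_deck, aproj_liftPoint]
  have hHw : H (deck (e * k) (liftPoint b)) = H (liftPoint a) := by
    rw [hH.apply_deck, hk]
    rcases he with rfl | rfl <;> push_cast <;> ring
  let Γ := PathConnectedSpace.somePath (liftPoint a) (deck (e * k) (liftPoint b))
  refine ⟨(Γ.map continuous_aproj).cast (aproj_liftPoint a).symm hw.symm, ?_⟩
  rw [displacement_eq hH Γ.toContinuousMap rfl]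
  simp [hHw]

theorem apply_eq_of_displacement_eq_zero (hH : IsDeckEquivariant H e) {h : Ann → S1}
    (hHh : ∀ z, proj (H z) = h (aproj z)) {a b : Ann} (γ : Path a b)
    (hγ : displacement H γ.toContinuousMap = 0) : h a = h b := by
  have := proj_displacement hH hHh γ.toContinuousMap
  rw [hγ, Path.coe_toContinuousMap, γ.source, γ.target] at this
  exact (sub_eq_zero.1 (by simpa [proj] using this.symm)).symm

end Displacement

theorem eq_zero_of_forall_pow_mul_eq {d : ℤ} (hd : 1 < |d|) {a : ℝ}
    (h : ∀ n : ℕ, 0 < n → ∃ b : ℝ, a = d ^ n * b ∧ proj b = proj a) : a = 0 := by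
  have hd' : (1 : ℝ) < |(d : ℝ)| := by exact_mod_cast hd
  have hd0 : (d : ℝ) ≠ 0 := by rintro h0; norm_num [h0] at hd'
  have hd1 : (d : ℝ) - 1 ≠ 0 := by rintro h1; rw [sub_eq_zero] at h1; simp [h1] at hd'
  obtain ⟨N, hN⟩ := pow_unbounded_of_one_lt |a * (d - 1)| hd'
  obtain ⟨b, hab, hb⟩ := h (N + 1) N.succ_pos
  obtain ⟨b', hab', hb'⟩ := h (N + 2) (by omega)
  obtain ⟨k, hk⟩ := proj_eq_proj_iff.1 (hb'.trans hb.symm)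
  have hbb' : b = d * b' :=
    mul_left_cancel₀ (pow_ne_zero (N + 1) hd0) (by rw [← hab, hab']; ring)
  -- `a (d - 1)` is a multiple of `d ^ (N + 2)` by the integer `k`, but smaller than `|d| ^ N`.
  have hkey : a * (d - 1) = d ^ (N + 2) * k := by
    rw [hab']; linear_combination (d : ℝ) ^ (N + 2) * (hk - hbb')
  have hk0 : k = 0 := by
    by_contra hk0
    have : |(d : ℝ)| ^ N ≤ |a * (d - 1)| := by
      rw [hkey, abs_mul, abs_pow]
      calc |(d : ℝ)| ^ N ≤ |(d : ℝ)| ^ (N + 2) * 1 := by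
            rw [mul_one]; exact pow_le_pow_right₀ hd'.le (by omega)
        _ ≤ |(d : ℝ)| ^ (N + 2) * |(k : ℝ)| := by gcongr; exact_mod_cast Int.one_le_abs hk0
    linarith
  rw [hk0, Int.cast_zero, mul_zero, mul_eq_zero] at hkey
  exact hkey.resolve_right hd1

theorem sub_apply_lift_eq {d : ℤ} {f : Ann → Ann} {h : Ann → S1} {F : AnnCov → AnnCov}
    {H : AnnCov → ℝ} (hF : Continuous F) (hFf : Semiconj aproj F f) (hH : Continuous H)
    (hHh : ∀ z, proj (H z) = h (aproj z)) (hsemi : ∀ a, h (f a) = md d (h a)) (z w : AnnCov) :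
    H (F z) - H (F w) = d * (H z - H w) := by
  have := sub_eq_sub_of_proj_eq (v := fun z ↦ d * H z) (hH.comp hF) (continuous_const.mul hH)
    (fun z ↦ by rw [comp_apply, hHh, hFf, hsemi, ← hHh, proj_intCast_mul]) z w
  simp only [comp_apply] at this
  linarith

structure IsSemiconjLift (d : ℤ) (f : Ann → Ann) (h : Ann → S1) (F : AnnCov → AnnCov)
    (H : AnnCov → ℝ) (e : ℤ) : Prop where
  continuous_lift : Continuous F
  semiconj_lift : Semiconj aproj F f
  equivariant : IsDeckEquivariant H e
  eq_one_or_eq_neg_one : e = 1 ∨ e = -1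
  proj_comp : ∀ z, proj (H z) = h (aproj z)
  sub_apply_lift : ∀ z w, H (F z) - H (F w) = d * (H z - H w)

namespace IsSemiconjLift

variable {d e : ℤ} {f : Ann → Ann} {h : Ann → S1} {F : AnnCov → AnnCov} {H : AnnCov → ℝ}
  {p q : Ann}

theorem ne_zero (L : IsSemiconjLift d f h F H e) : e ≠ 0 := by
  rcases L.eq_one_or_eq_neg_one with rfl | rfl <;> decide

theorem sub_apply_iterate (L : IsSemiconjLift d f h F H e) (n : ℕ) (z w : AnnCov) :
    H (F^[n] z) - H (F^[n] w) = d ^ n * (H z - H w) := by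
  induction n with
  | zero => simp
  | succ n ih => rw [iterate_succ_apply', iterate_succ_apply', L.sub_apply_lift, ih]; ring

theorem displacement_comp_iterate (L : IsSemiconjLift d f h F H e) (hf : Continuous f) (n : ℕ)
    (γ : C(I, Ann)) :
    displacement H ((⟨f^[n], hf.iterate n⟩ : C(Ann, Ann)).comp γ) = d ^ n * displacement H γ := by
  exact_mod_cast displacement_comp L.equivariant (hf.iterate n) (L.continuous_lift.iterate n)
    (L.semiconj_lift.iterate_right n) (L.sub_apply_iterate n) γ

theorem injective (L : IsSemiconjLift d f h F H e) (hcov : IsCoveringMap f) (hd : d ≠ 0) :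
    Injective F := by
  intro z w hzw
  refine eq_of_aproj_eq_of_apply_eq L.equivariant L.ne_zero
    (hcov.eq_of_lift_eq continuous_aproj continuous_aproj L.continuous_lift L.semiconj_lift hzw) ?_
  have := L.sub_apply_lift z w
  rw [hzw, sub_self, zero_eq_mul] at this
  exact sub_eq_zero.1 (this.resolve_left (by exact_mod_cast hd))

theorem displacement_eq_zero_of_homotopic (L : IsSemiconjLift d f h F H e) (hf : Continuous f)
    (hd : d ≠ 1) (hp : f p = p) (hq : f q = q) (γ : Path p q)
    (hγ : ((γ.map hf).cast hp.symm hq.symm).Homotopic γ) :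
    displacement H γ.toContinuousMap = 0 := by
  have hcomp := displacement_comp L.equivariant hf L.continuous_lift L.semiconj_lift
    L.sub_apply_lift γ.toContinuousMap
  rw [show (⟨f, hf⟩ : C(Ann, Ann)).comp γ.toContinuousMap
    = ((γ.map hf).cast hp.symm hq.symm).toContinuousMap from rfl,
    displacement_eq_of_homotopic L.equivariant hγ, ← sub_eq_zero, ← one_sub_mul,
    mul_eq_zero] at hcomp
  exact hcomp.resolve_left (sub_ne_zero.2 (by exact_mod_cast hd.symm))

theorem displacement_eq_zero_of_forall_lift (L : IsSemiconjLift d f h F H e)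
    (hcov : IsCoveringMap f) (hf : Continuous f) (hd : 1 < |d|) (hp : f p = p) (γ : Path p q)
    (hγ : ∀ n : ℕ, 0 < n → ∀ δ : I → Ann, Continuous δ → δ 0 = p →
      (∀ t, f^[n] (δ t) = γ t) → δ 1 = q) :
    displacement H γ.toContinuousMap = 0 := by
  refine eq_zero_of_forall_pow_mul_eq hd fun n hn ↦ ?_
  obtain ⟨δ, hδ, hδ0⟩ := hcov.exists_path_lifts_iterate n γ.toContinuousMap p
    (γ.source.trans (iterate_fixed hp n).symm)
  have hδ1 : δ 1 = q := hγ n hn δ δ.continuous hδ0 (congrFun hδ)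
  refine ⟨displacement H δ, ?_, ?_⟩
  · rw [← L.displacement_comp_iterate hf n δ]
    exact congrArg _ (ContinuousMap.ext fun t ↦ (congrFun hδ t).symm)
  · rw [proj_displacement L.equivariant L.proj_comp, proj_displacement L.equivariant L.proj_comp,
      hδ0, hδ1]
    simp

theorem homotopic_of_displacement_eq_zero (L : IsSemiconjLift d f h F H e) (hf : Continuous f)
    (hp : f p = p) (hq : f q = q) (γ : Path p q) (hγ : displacement H γ.toContinuousMap = 0) :
    ((γ.map hf).cast hp.symm hq.symm).Homotopic γ := by
  refine homotopic_of_displacement_eq L.equivariant L.ne_zero ?_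
  have := displacement_comp L.equivariant hf L.continuous_lift L.semiconj_lift L.sub_apply_lift
    γ.toContinuousMap
  rw [hγ, mul_zero] at this
  rw [hγ]
  exact this

theorem iterate_lift_end_eq (L : IsSemiconjLift d f h F H e) (hcov : IsCoveringMap f)
    (hf : Continuous f) (hd : d ≠ 0) (hq : f q = q) (γ : Path p q)
    (hγ : displacement H γ.toContinuousMap = 0) (n : ℕ) (δ : I → Ann) (hδ : Continuous δ)
    (hδ0 : δ 0 = p) (hδγ : ∀ t, f^[n] (δ t) = γ t) : δ 1 = q := by
  have hp : p = aproj (liftPoint p) := (aproj_liftPoint p).symm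
  set Δ := isCoveringMap_aproj.liftPath ⟨δ, hδ⟩ _ (hδ0.trans hp)
  set Γ := isCoveringMap_aproj.liftPath γ.toContinuousMap _ (γ.source.trans hp)
  have hΔ : aproj ∘ Δ = δ := isCoveringMap_aproj.liftPath_lifts ..
  have hΓ : aproj ∘ Γ = γ := isCoveringMap_aproj.liftPath_lifts ..
  have hHΔ : H (Δ 1) = H (liftPoint p) := by
    have := L.displacement_comp_iterate hf n ⟨δ, hδ⟩
    rw [show (⟨f^[n], hf.iterate n⟩ : C(Ann, Ann)).comp ⟨δ, hδ⟩ = γ.toContinuousMap from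
      ContinuousMap.ext hδγ, hγ, displacement_eq L.equivariant Δ hΔ,
      isCoveringMap_aproj.liftPath_zero, zero_eq_mul] at this
    exact sub_eq_zero.1 (this.resolve_left (pow_ne_zero n (by exact_mod_cast hd)))
  have hHΓ : H (Γ 1) = H (liftPoint p) := by
    rw [displacement_eq L.equivariant Γ hΓ, isCoveringMap_aproj.liftPath_zero] at hγ
    exact sub_eq_zero.1 hγ
  have hend : Δ 1 = Γ 1 := by
    refine (L.injective hcov hd).iterate n
      (eq_of_aproj_eq_of_apply_eq L.equivariant L.ne_zero ?_ ?_)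
    · rw [(L.semiconj_lift.iterate_right n).eq, (L.semiconj_lift.iterate_right n).eq,
        ← comp_apply (f := aproj), hΔ, ← comp_apply (f := aproj), hΓ]
      simp [hδγ, iterate_fixed hq]
    · rw [← sub_eq_zero, L.sub_apply_iterate, hHΔ, hHΓ, sub_self, mul_zero]
  rw [← congrFun hΔ 1, comp_apply, hend, ← comp_apply (f := aproj), hΓ]
  simp

end IsSemiconjLift

theorem fixed_points_same_fiber_tfae_general
    (d : ℤ) (hd : 1 < |d|)
    (f : Ann → Ann) (hcov : IsCoveringMap f) (hf : Continuous f)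
    (hdeg : HasDegree f d)
    (h : Ann → S1) (hsemi : ∀ a, h (f a) = md d (h a))
    (hiso : ∃ e : ℤ, (e = 1 ∨ e = -1) ∧ ∃ H : AnnCov → ℝ, Continuous H ∧
      (∀ p, proj (H p) = h (aproj p)) ∧
      ∀ (x : Set.Ioo (0:ℝ) 1) (y : ℝ), H (x, y + 1) = H (x, y) + e)
    (p q : Ann) (hp : f p = p) (hq : f q = q) :
    ((∃ γ : Path p q, ∀ n : ℕ, 0 < n →
        ∀ δ : unitInterval → Ann, Continuous δ → δ 0 = p →
          (∀ t, f^[n] (δ t) = γ t) → δ 1 = q) ↔ h p = h q) ∧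
    ((∃ γ : Path p q, Path.Homotopic ((γ.map hf).cast hp.symm hq.symm) γ) ↔
      h p = h q) := by
  obtain ⟨F, hF, hFf, -⟩ := hdeg
  obtain ⟨e, he, H, hH, hHh, hHe⟩ := hiso
  have L : IsSemiconjLift d f h F H e :=
    ⟨hF, hFf, hHe, he, hHh, sub_apply_lift_eq hF hFf hH hHh hsemi⟩
  have hd0 : d ≠ 0 := by rintro rfl; simp at hd
  have hd1 : d ≠ 1 := by rintro rfl; simp at hd
  have h_eq := apply_eq_of_displacement_eq_zero hHe hHh (a := p) (b := q)
  refine ⟨⟨fun ⟨γ, hγ⟩ ↦ h_eq γ (L.displacement_eq_zero_of_forall_lift hcov hf hd hp γ hγ),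
    fun hpq ↦ ?_⟩, ⟨fun ⟨γ, hγ⟩ ↦ h_eq γ (L.displacement_eq_zero_of_homotopic hf hd1 hp hq γ hγ),
    fun hpq ↦ ?_⟩⟩
  all_goals obtain ⟨γ, hγ⟩ := exists_path_displacement_eq_zero hHe he hHh hpq
  · exact ⟨γ, fun n _ δ hδ hδ0 hδγ ↦ L.iterate_lift_end_eq hcov hf hd0 hq γ hγ n δ hδ hδ0 hδγ⟩
  · exact ⟨γ, L.homotopic_of_displacement_eq_zero hf hp hq γ hγ⟩

/-- for fixed points `p`, `q` of `f`, the following are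
equivalent: (1) some arc `γ` from `p` to `q` has all of its `fⁿ`-lifts starting
at `p` ending at `q`; (2) some arc `γ` from `p` to `q` satisfies `f(γ) ≃ γ` rel
endpoints; (3) `h(p) = h(q)` for the semiconjugacy `h`. -/
theorem fixed_points_same_fiber_tfae
    (d : ℤ) (hd : 1 < |d|)
    (f : Ann → Ann) (hcov : IsCoveringMap f) (hf : Continuous f)
    (hdeg : HasDegree f d)
    (h : Ann → S1) (hhc : Continuous h) (hsemi : ∀ a, h (f a) = md d (h a))
    (hiso : ∃ e : ℤ, (e = 1 ∨ e = -1) ∧ ∃ H : AnnCov → ℝ, Continuous H ∧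
      (∀ p, proj (H p) = h (aproj p)) ∧
      ∀ (x : Set.Ioo (0:ℝ) 1) (y : ℝ), H (x, y + 1) = H (x, y) + e)
    (p q : Ann) (hp : f p = p) (hq : f q = q) :
    ((∃ γ : Path p q, ∀ n : ℕ, 0 < n →
        ∀ δ : unitInterval → Ann, Continuous δ → δ 0 = p →
          (∀ t, f^[n] (δ t) = γ t) → δ 1 = q) ↔ h p = h q) ∧
    ((∃ γ : Path p q, Path.Homotopic ((γ.map hf).cast hp.symm hq.symm) γ) ↔
      h p = h q) :=
  fixed_points_same_fiber_tfae_general d hd f hcov hf hdeg h hsemi hiso p q hp hq
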